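/- arXiv:1111.5970 — 4 statements merged into one kernel-verified Lean document; each statement's English description precedes it below -/
import Mathlib

section
/- (Minimum-maximum principle) Let S : R^{r+1} -> R be a C^2 local energy of range r satisfying: S(ξ) = Σ_{j=1}^r f_j(ξ_1, ξ_{j+1}) where each f_j is C^2 with mixed second partial derivative ∂_1∂_2 f_j ≤ -λ < 0 everywhere. For sequences x, y : Z -> R define M_i = max(x_i, y_i) and m_i = min(x_i, y_i), and for a finite interval B of Z define W_B(z) = Σ_{i∈B} S(z_i, ..., z_{i+r}). Then W_B(x) + W_B(y) ≥ W_B(M) + W_B(m). -/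
/-!
Each summand `f_j(z_i, z_{i+j})` of the energy is submodular on `ℝ²`: for `a ≤ c`, the
twist condition `∂₁∂₂ f ≤ 0` makes `μ ↦ f c μ - f a μ` antitone, which is exactly the
inequality `f(a ⊔ c, b ⊔ d) + f(a ⊓ c, b ⊓ d) ≤ f(a, b) + f(c, d)`. Summing over `i` and `j`
gives the minimum–maximum principle.
-/

open Finset Filter Topology

noncomputable def d1 (f : ℝ → ℝ → ℝ) (ν μ : ℝ) : ℝ := deriv (fun t => f t μ) ν
noncomputable def d2 (f : ℝ → ℝ → ℝ) (ν μ : ℝ) : ℝ := deriv (fun t => f ν t) μ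
noncomputable def d11 (f : ℝ → ℝ → ℝ) (ν μ : ℝ) : ℝ := deriv (fun t => d1 f t μ) ν
noncomputable def d12 (f : ℝ → ℝ → ℝ) (ν μ : ℝ) : ℝ := deriv (fun t => d2 f t μ) ν
noncomputable def d22 (f : ℝ → ℝ → ℝ) (ν μ : ℝ) : ℝ := deriv (fun t => d2 f ν t) μ

/-- The local energy at site `i` of the sequence `z`:  `S_i(z) = ∑_{j=1}^r f_j(z_i, z_{i+j})`. -/
noncomputable def siteE (r : ℕ) (f : ℕ → ℝ → ℝ → ℝ) (z : ℤ → ℝ) (i : ℤ) : ℝ :=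
  ∑ j ∈ Finset.Icc 1 r, f j (z i) (z (i + j))

/-- `W_B` for the segment `B = [a,b] ⊂ ℤ`. -/
noncomputable def Wseg (r : ℕ) (f : ℕ → ℝ → ℝ → ℝ) (a b : ℤ) (z : ℤ → ℝ) : ℝ :=
  ∑ i ∈ Finset.Icc a b, siteE r f z i

/-- A global minimizer: for every segment with interior `[a,b]` and every variation `v`
supported in `[a,b]`, the energy does not decrease. -/
def IsGlobalMin (r : ℕ) (f : ℕ → ℝ → ℝ → ℝ) (x : ℤ → ℝ) : Prop :=
  ∀ a b : ℤ, ∀ v : ℤ → ℝ, (∀ i, v i ≠ 0 → i ∈ Finset.Icc a b) →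
    Wseg r f (a - r) b x ≤ Wseg r f (a - r) b (x + v)

/-- The variational monotone recurrence relation `∑_{j=i-r}^{i} ∂_i S_j(x) = 0` at site `i`. -/
def SolvesEL (r : ℕ) (f : ℕ → ℝ → ℝ → ℝ) (x : ℤ → ℝ) (i : ℤ) : Prop :=
  (∑ j ∈ Finset.Icc 1 r, (d1 (f j) (x i) (x (i + j)) + d2 (f j) (x (i - j)) (x i))) = 0

/-- A local energy of range `r` in the sense of Definition 1.5 of the paper. -/
structure LocalEnergy (r : ℕ) (K lam : ℝ) where
  f : ℕ → ℝ → ℝ → ℝ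
  smooth : ∀ j, ContDiff ℝ 2 (fun p : ℝ × ℝ => f j p.1 p.2)
  periodic : ∀ j ν μ, f j (ν + 1) (μ + 1) = f j ν μ
  bound11 : ∀ j ν μ, |d11 (f j) ν μ| ≤ K / r
  bound12 : ∀ j ν μ, |d12 (f j) ν μ| ≤ K / r
  bound22 : ∀ j ν μ, |d22 (f j) ν μ| ≤ K / r
  coercive : ∀ j ∈ Finset.Icc 1 r, ∀ C : ℝ, ∃ R : ℝ, ∀ ν μ : ℝ, R ≤ |ν - μ| → C ≤ f j ν μ
  twist : ∀ j ∈ Finset.Icc 1 r, ∀ ν μ : ℝ, d12 (f j) ν μ ≤ -lam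

/-- `x` and `y` are weakly ordered on the set `s`. -/
def WOrd (x y : ℤ → ℝ) (s : Set ℤ) : Prop :=
  (∀ i ∈ s, x i ≤ y i) ∨ (∀ i ∈ s, y i ≤ x i)

/-- `D` is an interval outside of which (on both components of the complement)
`x` and `y` are weakly ordered. -/
def CrossProp (x y : ℤ → ℝ) (D : Set ℤ) : Prop :=
  D.OrdConnected ∧ WOrd x y {i | ∀ j ∈ D, i < j} ∧ WOrd x y {i | ∀ j ∈ D, j < i}

/-- The domain of crossing of `x` and `y`: the minimal interval `D` such that `x` and `y`
are weakly ordered on the connected components of its complement. -/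
def IsCrossingDomain (x y : ℤ → ℝ) (D : Set ℤ) : Prop :=
  CrossProp x y D ∧ ∀ D' : Set ℤ, CrossProp x y D' → D ⊆ D'

/-- The translation `(τ_{k,l} x)_i = x_{i-k} + l`. -/
def transl (k l : ℤ) (x : ℤ → ℝ) : ℤ → ℝ := fun i => x (i - k) + l

/-- The Birkhoff property. -/
def Birkhoff (x : ℤ → ℝ) : Prop :=
  ∀ k l : ℤ, (∀ i, transl k l x i ≤ x i) ∨ (∀ i, x i ≤ transl k l x i)

open Function

section Submodular

variable {f : ℝ → ℝ → ℝ}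

lemma hasDerivAt_right_of_differentiable (hf : Differentiable ℝ (uncurry f)) (ν μ : ℝ) :
    HasDerivAt (f ν) (fderiv ℝ (uncurry f) (ν, μ) (0, 1)) μ :=
  (hf (ν, μ)).hasFDerivAt.comp_hasDerivAt μ ((hasDerivAt_const μ ν).prodMk (hasDerivAt_id μ))

lemma d2_eq_fderiv (hf : Differentiable ℝ (uncurry f)) (ν μ : ℝ) :
    d2 f ν μ = fderiv ℝ (uncurry f) (ν, μ) (0, 1) :=
  (hasDerivAt_right_of_differentiable hf ν μ).deriv

lemma differentiable_d2_left (hf : ContDiff ℝ 2 (uncurry f)) (μ : ℝ) :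
    Differentiable ℝ (fun ν => d2 f ν μ) := by
  have hdiff : Differentiable ℝ (uncurry f) := hf.differentiable (by norm_num)
  have hC1 : ContDiff ℝ 1 (fun p : ℝ × ℝ => fderiv ℝ (uncurry f) p (0, 1)) :=
    (hf.fderiv_right le_rfl).clm_apply contDiff_const
  simp only [d2_eq_fderiv hdiff]
  exact (hC1.differentiable one_ne_zero).comp (differentiable_id.prodMk (differentiable_const μ))

lemma antitone_d2_left (hf : ContDiff ℝ 2 (uncurry f)) (h12 : ∀ ν μ, d12 f ν μ ≤ 0) (μ : ℝ) :
    Antitone (fun ν => d2 f ν μ) :=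
  antitone_of_deriv_nonpos (differentiable_d2_left hf μ) (fun ν => h12 ν μ)

lemma antitone_sub_of_d12_nonpos (hf : ContDiff ℝ 2 (uncurry f))
    (h12 : ∀ ν μ, d12 f ν μ ≤ 0) {a c : ℝ} (hac : a ≤ c) :
    Antitone (fun μ => f c μ - f a μ) := by
  have hdiff : Differentiable ℝ (uncurry f) := hf.differentiable (by norm_num)
  have hderiv (μ : ℝ) : HasDerivAt (fun t => f c t - f a t) (d2 f c μ - d2 f a μ) μ := by
    rw [d2_eq_fderiv hdiff, d2_eq_fderiv hdiff]
    exact (hasDerivAt_right_of_differentiable hdiff c μ).sub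
      (hasDerivAt_right_of_differentiable hdiff a μ)
  refine antitone_of_deriv_nonpos (fun μ => (hderiv μ).differentiableAt) fun μ => ?_
  rw [(hderiv μ).deriv, sub_nonpos]
  exact antitone_d2_left hf h12 μ hac

lemma map_max_add_map_min_le (hf : ContDiff ℝ 2 (uncurry f))
    (h12 : ∀ ν μ, d12 f ν μ ≤ 0) (a b c d : ℝ) :
    f (max a c) (max b d) + f (min a c) (min b d) ≤ f a b + f c d := by
  wlog hac : a ≤ c generalizing a b c d
  · have := this c d a b (le_of_not_ge hac)
    rw [max_comm a, max_comm b, min_comm a, min_comm b]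
    linarith
  rw [max_eq_right hac, min_eq_left hac]
  rcases le_total b d with hbd | hdb
  · rw [max_eq_right hbd, min_eq_left hbd, add_comm]
  · rw [max_eq_left hdb, min_eq_right hdb]
    linarith [antitone_sub_of_d12_nonpos hf h12 hac hdb]

end Submodular

lemma siteE_max_add_siteE_min_le {r : ℕ} {f : ℕ → ℝ → ℝ → ℝ}
    (hf : ∀ j ∈ Finset.Icc 1 r, ContDiff ℝ 2 (uncurry (f j)))
    (h12 : ∀ j ∈ Finset.Icc 1 r, ∀ ν μ, d12 (f j) ν μ ≤ 0) (x y : ℤ → ℝ) (i : ℤ) :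
    siteE r f (fun i => max (x i) (y i)) i + siteE r f (fun i => min (x i) (y i)) i ≤
      siteE r f x i + siteE r f y i := by
  simp only [siteE, ← Finset.sum_add_distrib]
  exact Finset.sum_le_sum fun j hj =>
    map_max_add_map_min_le (hf j hj) (h12 j hj) (x i) (x (i + j)) (y i) (y (i + j))

theorem stmt2_general (r : ℕ) (lam : ℝ) (hlam : 0 < lam)
    (f : ℕ → ℝ → ℝ → ℝ)
    (hsmooth : ∀ j, ContDiff ℝ 2 (fun p : ℝ × ℝ => f j p.1 p.2))
    (htwist : ∀ j ∈ Finset.Icc 1 r, ∀ ν μ : ℝ, d12 (f j) ν μ ≤ -lam)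
    (x y : ℤ → ℝ) (a b : ℤ) :
    Wseg r f a b (fun i => max (x i) (y i)) + Wseg r f a b (fun i => min (x i) (y i)) ≤
      Wseg r f a b x + Wseg r f a b y := by
  have h12 : ∀ j ∈ Finset.Icc 1 r, ∀ ν μ, d12 (f j) ν μ ≤ 0 := fun j hj ν μ =>
    (htwist j hj ν μ).trans (neg_nonpos.mpr hlam.le)
  simp only [Wseg, ← Finset.sum_add_distrib]
  exact Finset.sum_le_sum fun i _ =>
    siteE_max_add_siteE_min_le (fun j _ => hsmooth j) h12 x y i

/-- Minimum–maximum principle: `W_B(M) + W_B(m) ≤ W_B(x) + W_B(y)` for the pointwise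
maximum `M` and minimum `m` of two sequences, under the strong twist condition. -/
theorem stmt2 (r : ℕ) (hr : 1 ≤ r) (lam : ℝ) (hlam : 0 < lam)
    (f : ℕ → ℝ → ℝ → ℝ)
    (hsmooth : ∀ j, ContDiff ℝ 2 (fun p : ℝ × ℝ => f j p.1 p.2))
    (htwist : ∀ j ∈ Finset.Icc 1 r, ∀ ν μ : ℝ, d12 (f j) ν μ ≤ -lam)
    (x y : ℤ → ℝ) (a b : ℤ) :
    Wseg r f a b (fun i => max (x i) (y i)) + Wseg r f a b (fun i => min (x i) (y i)) ≤
      Wseg r f a b x + Wseg r f a b y :=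
  stmt2_general r lam hlam f hsmooth htwist x y a b
end

section
/- (Aubry's Lemma for twist maps, r = 1) Let S be a local energy of range r = 1 satisfying periodicity, uniform second-derivative bounds, coercivity, and the strong twist condition ∂_1∂_2 S ≤ -λ < 0. If x ≠ y are two global minimizers, then x and y cross at most once: the domain of crossing of x and y is empty or a single point. -/
open Finset Filter Topology

section infra
variable {F : ℝ → ℝ → ℝ} {lam : ℝ}

lemma diffFu (hsm : ContDiff ℝ 2 (fun p : ℝ × ℝ => F p.1 p.2)) :
    Differentiable ℝ (fun p : ℝ × ℝ => F p.1 p.2) :=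
  hsm.differentiable (by norm_num)

lemma diff_fst (hsm : ContDiff ℝ 2 (fun p : ℝ × ℝ => F p.1 p.2)) (μ : ℝ) :
    Differentiable ℝ (fun t => F t μ) :=
  (diffFu hsm).comp (differentiable_id.prodMk (differentiable_const μ))

lemma diff_snd (hsm : ContDiff ℝ 2 (fun p : ℝ × ℝ => F p.1 p.2)) (ν : ℝ) :
    Differentiable ℝ (fun t => F ν t) :=
  (diffFu hsm).comp ((differentiable_const ν).prodMk differentiable_id)

lemma hF1 (hsm : ContDiff ℝ 2 (fun p : ℝ × ℝ => F p.1 p.2)) (ν μ : ℝ) :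
    HasDerivAt (fun t => F t μ) (d1 F ν μ) ν :=
  ((diff_fst hsm μ) ν).hasDerivAt

lemma hF2 (hsm : ContDiff ℝ 2 (fun p : ℝ × ℝ => F p.1 p.2)) (ν μ : ℝ) :
    HasDerivAt (fun t => F ν t) (d2 F ν μ) μ :=
  ((diff_snd hsm ν) μ).hasDerivAt

lemma d2_eq_fderiv_s6 (hsm : ContDiff ℝ 2 (fun p : ℝ × ℝ => F p.1 p.2)) (ν μ : ℝ) :
    d2 F ν μ = fderiv ℝ (fun p : ℝ × ℝ => F p.1 p.2) (ν, μ) (0, 1) := by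
  have h := ((diffFu hsm) (ν, μ)).hasFDerivAt
  have h2 : HasDerivAt (fun t => F ν t)
      (fderiv ℝ (fun p : ℝ × ℝ => F p.1 p.2) (ν, μ) (0, 1)) μ := by
    have := h.comp_hasDerivAt μ ((hasDerivAt_const μ ν).prodMk (hasDerivAt_id μ))
    simpa [Function.comp_def] using this
  exact h2.deriv

lemma hD2 (hsm : ContDiff ℝ 2 (fun p : ℝ × ℝ => F p.1 p.2)) (μ ν : ℝ) :
    HasDerivAt (fun t => d2 F t μ) (d12 F ν μ) ν := by
  have hdiff : Differentiable ℝ (fun t => d2 F t μ) := by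
    have : (fun t => d2 F t μ)
        = fun t => (ContinuousLinearMap.apply ℝ ℝ ((0:ℝ), (1:ℝ)))
            (fderiv ℝ (fun p : ℝ × ℝ => F p.1 p.2) (t, μ)) := by
      funext t; simp [d2_eq_fderiv_s6 hsm t μ]
    rw [this]
    exact (ContinuousLinearMap.apply ℝ ℝ ((0:ℝ), (1:ℝ))).differentiable.comp
      (((hsm.fderiv_right (m := 1) (by norm_num)).differentiable one_ne_zero).comp
        (differentiable_id.prodMk (differentiable_const μ)))
  exact (hdiff ν).hasDerivAt

/-- `d2` decreases with rate `lam` in the first variable. -/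
lemma d2_anti (hsm : ContDiff ℝ 2 (fun p : ℝ × ℝ => F p.1 p.2))
    (htw : ∀ ν μ, d12 F ν μ ≤ -lam) (μ : ℝ) {p q : ℝ} (hpq : p ≤ q) :
    d2 F q μ + lam * (q - p) ≤ d2 F p μ := by
  have hmono : Antitone (fun t => d2 F t μ + lam * t) := by
    apply antitone_of_deriv_nonpos
    · intro t
      have hl : HasDerivAt (fun t : ℝ => lam * t) lam t := by
        simpa using (hasDerivAt_id t).const_mul lam
      exact ((hD2 hsm μ t).add hl).differentiableAt
    · intro t
      have hl : HasDerivAt (fun t : ℝ => lam * t) lam t := by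
        simpa using (hasDerivAt_id t).const_mul lam
      have hd : HasDerivAt (fun t => d2 F t μ + lam * t) (d12 F t μ + lam) t := (hD2 hsm μ t).add hl
      rw [hd.deriv]
      have := htw t μ
      linarith
  have := hmono hpq
  simp only at this
  linarith

/-- Lemma A: strict submodularity with quantitative penalty. -/
lemma lemA (hsm : ContDiff ℝ 2 (fun p : ℝ × ℝ => F p.1 p.2))
    (htw : ∀ ν μ, d12 F ν μ ≤ -lam) {p q p' q' : ℝ} (hpq : p ≤ q) (hq'p' : q' ≤ p') :
    F p q' + F q p' ≤ F p p' + F q q' - lam * (q - p) * (p' - q') := by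
  have hmono : Antitone (fun t => F q t - F p t + lam * (q - p) * t) := by
    apply antitone_of_deriv_nonpos
    · intro t
      have hl : HasDerivAt (fun t : ℝ => lam * (q - p) * t) (lam * (q - p)) t := by
        simpa using (hasDerivAt_id t).const_mul (lam * (q - p))
      exact (((hF2 hsm q t).sub (hF2 hsm p t)).add hl).differentiableAt
    · intro t
      have hl : HasDerivAt (fun t : ℝ => lam * (q - p) * t) (lam * (q - p)) t := by
        simpa using (hasDerivAt_id t).const_mul (lam * (q - p))
      have hd : HasDerivAt (fun t => F q t - F p t + lam * (q - p) * t)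
          (d2 F q t - d2 F p t + lam * (q - p)) t := ((hF2 hsm q t).sub (hF2 hsm p t)).add hl
      rw [hd.deriv]
      have := d2_anti hsm htw t hpq
      nlinarith
  have := hmono hq'p'
  simp only at this
  nlinarith

/-- `d1` decreases with rate `lam` in the second variable. -/
lemma d1_anti (hsm : ContDiff ℝ 2 (fun p : ℝ × ℝ => F p.1 p.2))
    (htw : ∀ ν μ, d12 F ν μ ≤ -lam) (ν : ℝ) {b' b : ℝ} (hb : b' ≤ b) :
    d1 F ν b + lam * (b - b') ≤ d1 F ν b' := by
  have hg : HasDerivAt (fun t => F t b - F t b') (d1 F ν b - d1 F ν b') ν :=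
    (hF1 hsm ν b).sub (hF1 hsm ν b')
  have hslope : ∀ z, ν < z →
      slope (fun t => F t b - F t b') ν z ≤ -(lam * (b - b')) := by
    intro z hz
    have hA := lemA hsm htw (le_of_lt hz) hb
    rw [slope_def_field]
    rw [div_le_iff₀ (by linarith)]
    nlinarith
  have htend : Tendsto (slope (fun t => F t b - F t b') ν) (𝓝[>] ν)
      (𝓝 (d1 F ν b - d1 F ν b')) :=
    (hasDerivAt_iff_tendsto_slope.mp hg).mono_left
      (nhdsWithin_mono ν fun z hz => ne_of_gt hz)
  have hle : d1 F ν b - d1 F ν b' ≤ -(lam * (b - b')) :=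
    le_of_tendsto htend (eventually_nhdsWithin_of_forall hslope)
  linarith

/-- Euler-Lagrange at a point from pointwise minimality. -/
lemma el_point (hsm : ContDiff ℝ 2 (fun p : ℝ × ℝ => F p.1 p.2)) (p q s : ℝ)
    (h : ∀ t, F p q + F q s ≤ F p (q + t) + F (q + t) s) :
    d2 F p q + d1 F q s = 0 := by
  have hq : HasDerivAt (fun t : ℝ => q + t) 1 0 := by
    simpa using (hasDerivAt_id (0:ℝ)).const_add q
  have h1 : HasDerivAt (fun t : ℝ => F p (q + t)) (d2 F p q) 0 := by
    have := (hF2 hsm p (q + 0)).comp 0 hq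
    simpa [Function.comp_def] using this
  have h2 : HasDerivAt (fun t : ℝ => F (q + t) s) (d1 F q s) 0 := by
    have := (hF1 hsm (q + 0) s).comp 0 hq
    simpa [Function.comp_def] using this
  have hphi : HasDerivAt (fun t : ℝ => F p (q + t) + F (q + t) s)
      (d2 F p q + d1 F q s) 0 := h1.add h2
  have hmin : IsLocalMin (fun t : ℝ => F p (q + t) + F (q + t) s) 0 :=
    Filter.Eventually.of_forall fun t => by simpa using h t
  have h0 := hmin.deriv_eq_zero
  rwa [hphi.deriv] at h0


/-- Strict submodularity with penalty, min/max form. -/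
lemma cross_ineq (hsm : ContDiff ℝ 2 (fun p : ℝ × ℝ => F p.1 p.2))
    (htw : ∀ ν μ, d12 F ν μ ≤ -lam) (p q p' q' : ℝ) :
    F (min p q) (min p' q') + F (max p q) (max p' q') ≤
      F p p' + F q q' + lam * min ((p - q) * (p' - q')) 0 := by
  rcases le_total p q with h1 | h1 <;> rcases le_total p' q' with h2 | h2
  · rw [min_eq_left h1, min_eq_left h2, max_eq_right h1, max_eq_right h2,
      min_eq_right (by nlinarith [mul_nonneg (sub_nonneg.mpr h1) (sub_nonneg.mpr h2)] :
        (0:ℝ) ≤ (p - q) * (p' - q'))]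
    linarith
  · rw [min_eq_left h1, min_eq_right h2, max_eq_right h1, max_eq_left h2,
      min_eq_left (by nlinarith [mul_nonneg (sub_nonneg.mpr h1) (sub_nonneg.mpr h2)] :
        (p - q) * (p' - q') ≤ 0)]
    have hA := lemA hsm htw h1 h2
    nlinarith
  · rw [min_eq_right h1, min_eq_left h2, max_eq_left h1, max_eq_right h2,
      min_eq_left (by nlinarith [mul_nonneg (sub_nonneg.mpr h1) (sub_nonneg.mpr h2)] :
        (p - q) * (p' - q') ≤ 0)]
    have hA := lemA hsm htw h1 h2
    nlinarith
  · rw [min_eq_right h1, min_eq_right h2, max_eq_left h1, max_eq_left h2,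
      min_eq_right (by nlinarith [mul_nonneg (sub_nonneg.mpr h1) (sub_nonneg.mpr h2)] :
        (0:ℝ) ≤ (p - q) * (p' - q'))]
    linarith

end infra

section book
variable {f : ℕ → ℝ → ℝ → ℝ}

lemma Wseg_eq (f : ℕ → ℝ → ℝ → ℝ) (a b : ℤ) (z : ℤ → ℝ) :
    Wseg 1 f a b z = ∑ i ∈ Finset.Icc a b, f 1 (z i) (z (i + 1)) := by
  unfold Wseg siteE
  apply Finset.sum_congr rfl
  intro i _
  simp

lemma Icc_pair (A B m : ℤ) (h1 : A ≤ m - 1) (h2 : m ≤ B) :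
    ({m - 1, m} : Finset ℤ) ⊆ Finset.Icc A B := by
  intro j hj
  simp only [Finset.mem_insert, Finset.mem_singleton] at hj
  rcases hj with rfl | rfl <;> (rw [Finset.mem_Icc]; omega)

/-- Euler-Lagrange at one site from minimality under one-site variations. -/
lemma el_of_Wmin (hsm : ContDiff ℝ 2 (fun p : ℝ × ℝ => f 1 p.1 p.2))
    {z : ℤ → ℝ} {A B m : ℤ} (hm1 : A ≤ m - 1) (hm2 : m ≤ B)
    (hmin : ∀ t : ℝ, Wseg 1 f A B z ≤ Wseg 1 f A B (z + fun j => if j = m then t else 0)) :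
    d2 (f 1) (z (m - 1)) (z m) + d1 (f 1) (z m) (z (m + 1)) = 0 := by
  apply el_point hsm
  intro t
  have hv := hmin t
  rw [Wseg_eq, Wseg_eq, ← sub_nonneg, ← Finset.sum_sub_distrib] at hv
  set z' : ℤ → ℝ := z + fun j => if j = m then t else 0 with hz'
  have hz'val : ∀ j, z' j = if j = m then z j + t else z j := by
    intro j
    by_cases h : j = m <;> simp [hz', Pi.add_apply, h]
  have hvan : ∀ i ∈ Finset.Icc A B, i ∉ ({m - 1, m} : Finset ℤ) →
      f 1 (z' i) (z' (i + 1)) - f 1 (z i) (z (i + 1)) = 0 := by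
    intro i _ hi
    simp only [Finset.mem_insert, Finset.mem_singleton] at hi
    push_neg at hi
    rw [hz'val, hz'val, if_neg hi.2, if_neg (by omega : i + 1 ≠ m), sub_self]
  rw [← Finset.sum_subset (Icc_pair A B m hm1 hm2) hvan,
    Finset.sum_pair (by omega : m - 1 ≠ m)] at hv
  rw [hz'val, hz'val, hz'val, hz'val] at hv
  rw [if_neg (by omega : m - 1 ≠ m), if_pos rfl, if_neg (by omega : m + 1 ≠ m),
    (by ring : m - 1 + 1 = m), if_pos rfl] at hv
  linarith

lemma el_of_glob (hsm : ContDiff ℝ 2 (fun p : ℝ × ℝ => f 1 p.1 p.2))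
    {x : ℤ → ℝ} (hx : IsGlobalMin 1 f x) (i : ℤ) :
    d2 (f 1) (x (i - 1)) (x i) + d1 (f 1) (x i) (x (i + 1)) = 0 := by
  apply el_of_Wmin hsm (le_refl (i - 1)) (le_refl i)
  intro t
  have := hx i i (fun j => if j = i then t else 0) (by
    intro j hj
    rw [Finset.mem_Icc]
    by_contra hc
    exact hj (if_neg (by omega)))
  simpa using this

end book

lemma CL {f : ℕ → ℝ → ℝ → ℝ} {lam : ℝ} (hlam : 0 < lam)
    (hsm : ContDiff ℝ 2 (fun p : ℝ × ℝ => f 1 p.1 p.2))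
    (htw : ∀ ν μ, d12 (f 1) ν μ ≤ -lam)
    {x y : ℤ → ℝ} (hx : IsGlobalMin 1 f x) (hy : IsGlobalMin 1 f y)
    {a b c : ℤ} (hab : a < b) (hbc : b < c)
    (ha : x a < y a) (hb : y b < x b) (hc : x c < y c) : False := by
  set F := f 1 with hF
  set ξ : ℤ → ℝ := fun i => if i ∈ Finset.Icc a c then min (x i) (y i) else x i with hξdef
  set η : ℤ → ℝ := fun i => if i ∈ Finset.Icc a c then max (x i) (y i) else y i with hηdef
  set pen : ℤ → ℝ := fun i => if i ∈ Finset.Icc a (c - 1)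
    then min ((x i - y i) * (x (i + 1) - y (i + 1))) 0 else 0 with hpendef
  set S : (ℤ → ℝ) → ℝ := fun z => ∑ i ∈ Finset.Icc (a - 1) c, F (z i) (z (i + 1)) with hSdef
  -- minimality comparisons
  have hWS : ∀ z, Wseg 1 f (a - 1) c z = S z := fun z => Wseg_eq f (a - 1) c z
  have hsuppξ : ∀ i, (fun i => ξ i - x i) i ≠ 0 → i ∈ Finset.Icc a c := by
    intro i hi
    by_contra hmem
    apply hi
    show (if i ∈ Finset.Icc a c then min (x i) (y i) else x i) - x i = 0
    rw [if_neg hmem, sub_self]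
  have hxξ : S x ≤ S ξ := by
    have h := hx a c (fun i => ξ i - x i) hsuppξ
    have hx' : x + (fun i => ξ i - x i) = ξ := by funext i; simp
    rw [hx'] at h
    simpa [Nat.cast_one, hWS] using h
  have hsuppη : ∀ i, (fun i => η i - y i) i ≠ 0 → i ∈ Finset.Icc a c := by
    intro i hi
    by_contra hmem
    apply hi
    show (if i ∈ Finset.Icc a c then max (x i) (y i) else y i) - y i = 0
    rw [if_neg hmem, sub_self]
  have hyη : S y ≤ S η := by
    have h := hy a c (fun i => η i - y i) hsuppη
    have hy' : y + (fun i => η i - y i) = η := by funext i; simp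
    rw [hy'] at h
    simpa [Nat.cast_one, hWS] using h
  -- per-site inequality
  have hsite : ∀ i ∈ Finset.Icc (a - 1) c,
      F (ξ i) (ξ (i + 1)) + F (η i) (η (i + 1)) ≤
        F (x i) (x (i + 1)) + F (y i) (y (i + 1)) + lam * pen i := by
    intro i hi
    by_cases hmid : i ∈ Finset.Icc a (c - 1)
    · have h1 : i ∈ Finset.Icc a c := by
        rw [Finset.mem_Icc] at hmid ⊢; omega
      have h2 : i + 1 ∈ Finset.Icc a c := by
        rw [Finset.mem_Icc] at hmid ⊢; omega
      rw [show ξ i = min (x i) (y i) from if_pos h1,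
        show ξ (i + 1) = min (x (i + 1)) (y (i + 1)) from if_pos h2,
        show η i = max (x i) (y i) from if_pos h1,
        show η (i + 1) = max (x (i + 1)) (y (i + 1)) from if_pos h2,
        show pen i = min ((x i - y i) * (x (i + 1) - y (i + 1))) 0 from if_pos hmid]
      exact cross_ineq hsm htw _ _ _ _
    · have hic : i = a - 1 ∨ i = c := by
        rw [Finset.mem_Icc] at hi; rw [Finset.mem_Icc] at hmid; omega
      have hpen0 : pen i = 0 := if_neg hmid
      rcases hic with h1 | h1
      · subst h1
        rw [show a - 1 + 1 = a by ring,
            show ξ (a - 1) = x (a - 1) from if_neg (by rw [Finset.mem_Icc]; omega),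
            show η (a - 1) = y (a - 1) from if_neg (by rw [Finset.mem_Icc]; omega),
            show ξ a = min (x a) (y a) from if_pos (by rw [Finset.mem_Icc]; omega),
            show η a = max (x a) (y a) from if_pos (by rw [Finset.mem_Icc]; omega),
            min_eq_left ha.le, max_eq_right ha.le, hpen0]
        linarith
      · subst h1
        rw [show ξ i = min (x i) (y i) from if_pos (by rw [Finset.mem_Icc]; omega),
          show η i = max (x i) (y i) from if_pos (by rw [Finset.mem_Icc]; omega),
          show ξ (i + 1) = x (i + 1) from if_neg (by rw [Finset.mem_Icc]; omega),
          show η (i + 1) = y (i + 1) from if_neg (by rw [Finset.mem_Icc]; omega),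
          min_eq_left hc.le, max_eq_right hc.le, hpen0]
        linarith
  have hsum := Finset.sum_le_sum hsite
  rw [Finset.sum_add_distrib] at hsum
  have hrhs : ∑ i ∈ Finset.Icc (a - 1) c,
      (F (x i) (x (i + 1)) + F (y i) (y (i + 1)) + lam * pen i)
      = S x + S y + lam * ∑ i ∈ Finset.Icc (a - 1) c, pen i := by
    rw [Finset.mul_sum, hSdef]
    rw [← Finset.sum_add_distrib, ← Finset.sum_add_distrib]
  rw [hrhs] at hsum
  have e1 : ∑ i ∈ Finset.Icc (a - 1) c, F (ξ i) (ξ (i + 1)) = S ξ := rfl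
  have e2 : ∑ i ∈ Finset.Icc (a - 1) c, F (η i) (η (i + 1)) = S η := rfl
  rw [e1, e2] at hsum
  -- pen sums to zero
  have hpen_nonpos : ∀ i ∈ Finset.Icc (a - 1) c, pen i ≤ 0 := by
    intro i _
    by_cases hmid : i ∈ Finset.Icc a (c - 1)
    · rw [show pen i = _ from if_pos hmid]; exact min_le_right _ 0
    · rw [show pen i = 0 from if_neg hmid]
  have hP0 : ∑ i ∈ Finset.Icc (a - 1) c, pen i = 0 := by
    have hle : ∑ i ∈ Finset.Icc (a - 1) c, pen i ≤ 0 :=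
      Finset.sum_nonpos hpen_nonpos
    rcases lt_or_eq_of_le hle with hlt | heq
    · exfalso
      linarith [mul_neg_of_pos_of_neg hlam hlt, hsum, hxξ, hyη]
    · exact heq
  have hpen_all : ∀ i ∈ Finset.Icc (a - 1) c, pen i = 0 :=
    (Finset.sum_eq_zero_iff_of_nonpos hpen_nonpos).mp hP0
  have hnocross : ∀ i ∈ Finset.Icc a (c - 1),
      0 ≤ (x i - y i) * (x (i + 1) - y (i + 1)) := by
    intro i hi
    have hi' : i ∈ Finset.Icc (a - 1) c := by
      rw [Finset.mem_Icc] at hi ⊢; omega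
    have := hpen_all i hi'
    rw [show pen i = _ from if_pos hi] at this
    calc (0:ℝ) = min ((x i - y i) * (x (i + 1) - y (i + 1))) 0 := this.symm
      _ ≤ _ := min_le_left _ _
  have hSξ : S ξ = S x := by
    rw [hP0] at hsum
    linarith
  -- find the touching point
  set T := (Finset.Icc a b).filter (fun k => y k < x k) with hT
  have hbT : b ∈ T := by
    rw [hT, Finset.mem_filter, Finset.mem_Icc]
    exact ⟨⟨hab.le, le_refl b⟩, hb⟩
  set m' := T.min' ⟨b, hbT⟩ with hm'
  have hm'T := T.min'_mem ⟨b, hbT⟩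
  rw [Finset.mem_filter, Finset.mem_Icc] at hm'T
  have ham' : a < m' := by
    rcases lt_or_eq_of_le hm'T.1.1 with h | h
    · exact h
    · exfalso; rw [← h] at hm'T; linarith [hm'T.2]
  have hm1ny : x (m' - 1) ≤ y (m' - 1) := by
    by_contra hcon
    push_neg at hcon
    have : m' - 1 ∈ T := by
      rw [hT, Finset.mem_filter, Finset.mem_Icc]
      exact ⟨⟨by omega, by omega⟩, hcon⟩
    have := T.min'_le _ this
    omega
  have hprod := hnocross (m' - 1) (by rw [Finset.mem_Icc]; omega)
  rw [(by ring : m' - 1 + 1 = m')] at hprod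
  have hδm : x (m' - 1) = y (m' - 1) := by
    nlinarith [hm'T.2]
  set m := m' - 1 with hmdef
  have hm1 : m + 1 = m' := by omega
  have ham : a < m := by
    rcases lt_or_eq_of_le (by omega : a ≤ m) with h | h
    · exact h
    · exfalso; rw [← h] at hδm; linarith
  -- ξ values near m
  have hξm : ξ m = x m := by
    rw [show ξ m = min (x m) (y m) from if_pos (by rw [Finset.mem_Icc]; omega)]
    exact min_eq_left hδm.le
  have hξm1 : ξ (m + 1) = y (m + 1) := by
    rw [show ξ (m + 1) = min (x (m + 1)) (y (m + 1)) from
      if_pos (by rw [Finset.mem_Icc]; omega)]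
    rw [hm1]
    exact min_eq_right hm'T.2.le
  have hξm0 : ξ (m - 1) ≤ x (m - 1) := by
    by_cases hmem : m - 1 ∈ Finset.Icc a c
    · rw [show ξ (m - 1) = min (x (m - 1)) (y (m - 1)) from if_pos hmem]
      exact min_le_left _ _
    · rw [show ξ (m - 1) = x (m - 1) from if_neg hmem]
  -- EL for x at m
  have elx := el_of_glob hsm hx m
  -- EL for ξ at m
  have elξ : d2 F (ξ (m - 1)) (ξ m) + d1 F (ξ m) (ξ (m + 1)) = 0 := by
    apply el_of_Wmin hsm (by omega : a - 1 ≤ m - 1) (by omega : m ≤ c)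
    intro t
    have hsupp : ∀ i, ((fun j => ξ j - x j + if j = m then t else 0) i ≠ 0) →
        i ∈ Finset.Icc a c := by
      intro i hi
      by_contra hmem
      apply hi
      show ξ i - x i + (if i = m then t else 0) = 0
      have him : i ≠ m := by
        rintro rfl
        exact hmem (by rw [Finset.mem_Icc]; omega)
      rw [show ξ i = x i from if_neg hmem, if_neg him]
      ring
    have h := hx a c (fun j => ξ j - x j + if j = m then t else 0) hsupp
    have hx' : x + (fun j => ξ j - x j + if j = m then t else 0)
        = ξ + fun j => if j = m then t else 0 := by
      funext j; simp [Pi.add_apply]; ring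
    rw [hx'] at h
    simp only [Nat.cast_one] at h
    rw [hWS, hWS] at h
    rw [hWS, hWS, hSξ]
    exact h
  -- final contradiction
  rw [hξm, hξm1] at elξ
  have hyx : y (m + 1) ≤ x (m + 1) := by rw [hm1]; exact hm'T.2.le
  have h1 := d1_anti hsm htw (x m) hyx
  have h2 := d2_anti hsm htw (x m) hξm0
  have hpos : 0 < lam * (x (m + 1) - y (m + 1)) := by
    apply mul_pos hlam
    have h3 : y (m + 1) < x (m + 1) := by rw [hm1]; exact hm'T.2
    linarith
  have hnn : 0 ≤ lam * (x (m - 1) - ξ (m - 1)) := by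
    apply mul_nonneg hlam.le
    linarith
  linarith

/-- Aubry's Lemma for range `r = 1` (twist maps): two distinct global minimizers cross at
most once, i.e. their domain of crossing is empty or a single point. -/
theorem stmt6 (K lam : ℝ) (hK : 0 < K) (hlam : 0 < lam)
    (E : LocalEnergy 1 K lam) (x y : ℤ → ℝ)
    (hx : IsGlobalMin 1 E.f x) (hy : IsGlobalMin 1 E.f y) (hne : x ≠ y)
    (D : Set ℤ) (hD : IsCrossingDomain x y D) :
    D = ∅ ∨ ∃ i : ℤ, D = {i} := by
  have hsm := E.smooth 1
  have htw : ∀ ν μ, d12 (E.f 1) ν μ ≤ -lam := E.twist 1 (by simp)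
  by_cases hQ : ∀ i, x i ≤ y i
  · left
    have hcp : CrossProp x y ∅ :=
      ⟨Set.ordConnected_empty, Or.inl fun i _ => hQ i, Or.inl fun i _ => hQ i⟩
    exact Set.subset_empty_iff.mp (hD.2 ∅ hcp)
  by_cases hP : ∀ i, y i ≤ x i
  · left
    have hcp : CrossProp x y ∅ :=
      ⟨Set.ordConnected_empty, Or.inr fun i _ => hP i, Or.inr fun i _ => hP i⟩
    exact Set.subset_empty_iff.mp (hD.2 ∅ hcp)
  push_neg at hQ hP
  obtain ⟨p0, hp0⟩ := hQ   -- y p0 < x p0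
  obtain ⟨q0, hq0⟩ := hP   -- x q0 < y q0
  -- helper to conclude from a singleton crossing domain
  have single : ∀ i0 : ℤ, CrossProp x y {i0} → D = ∅ ∨ ∃ i : ℤ, D = {i} := by
    intro i0 hcp
    have hsub := hD.2 {i0} hcp
    rcases Set.subset_singleton_iff_eq.mp hsub with h | h
    · exact Or.inl h
    · exact Or.inr ⟨i0, h⟩
  by_cases hC1 : ∃ p q : ℤ, x p < y p ∧ y q < x q ∧ p < q
  · by_cases hC2 : ∃ p q : ℤ, y p < x p ∧ x q < y q ∧ p < q
    · exfalso
      obtain ⟨p, q, hp, hq, hpq⟩ := hC1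
      obtain ⟨p', q', hp', hq', hpq'⟩ := hC2
      rcases lt_trichotomy p' p with h | h | h
      · exact CL hlam hsm htw hy hx h hpq hp' hp hq
      · rw [h] at hp'; linarith
      · exact CL hlam hsm htw hx hy h hpq' hp hp' hq'
    · -- no (+) strictly before a (−): all (−) points ≤ all (+) points
      push_neg at hC2
      have hbdd : ∃ b : ℤ, ∀ z : ℤ, y z < x z → b ≤ z := ⟨q0, fun z hz => hC2 z q0 hz hq0⟩
      obtain ⟨i0, hi0, hleast⟩ := Int.exists_least_of_bdd hbdd ⟨p0, hp0⟩
      apply single i0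
      refine ⟨Set.ordConnected_singleton, Or.inl ?_, Or.inr ?_⟩
      · intro i hi
        have hii : i < i0 := hi i0 rfl
        by_contra hcon
        push_neg at hcon
        have := hleast i hcon
        omega
      · intro i hi
        have hii : i0 < i := hi i0 rfl
        by_contra hcon
        push_neg at hcon
        have := hC2 i0 i hi0 hcon
        omega
  · -- no (−) strictly before a (+): all (+) points ≤ all (−) points
    push_neg at hC1
    have hbdd : ∃ b : ℤ, ∀ z : ℤ, x z < y z → b ≤ z := ⟨p0, fun z hz => hC1 z p0 hz hp0⟩
    obtain ⟨i0, hi0, hleast⟩ := Int.exists_least_of_bdd hbdd ⟨q0, hq0⟩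
    apply single i0
    refine ⟨Set.ordConnected_singleton, Or.inr ?_, Or.inl ?_⟩
    · intro i hi
      have hii : i < i0 := hi i0 rfl
      by_contra hcon
      push_neg at hcon
      have := hleast i hcon
      omega
    · intro i hi
      have hii : i0 < i := hi i0 rfl
      by_contra hcon
      push_neg at hcon
      have := hC1 i0 i hi0 hcon
      omega
end

section
/- If x and y are global minimizers whose domain of crossing D is bounded and x_i > y_i for all i in Z \ D, then D is empty. -/
open Finset Filter Topology

/-!
Aubry's crossing argument. Let `a = min D`. Minimality of `D` forces `x a < y a`, while
`y (a - 1) < x (a - 1)` as `a - 1 ∉ D`. Since `y ≤ x` off the bounded set `D`, the sequences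
`x ⊔ y` and `x ⊓ y` are compactly supported variations of `x` and `y`, so minimality gives
`W(x ⊔ y) + W(x ⊓ y) ≥ W(x) + W(y)`. But the twist condition makes every `f_j` strictly
submodular, and the crossing between `a - 1` and `a` makes this inequality strictly fail.
-/

lemma differentiable_right_of_contDiff_uncurry {f : ℝ → ℝ → ℝ} {n : WithTop ℕ∞}
    (hf : ContDiff ℝ n (fun p : ℝ × ℝ => f p.1 p.2)) (hn : n ≠ 0) (ν : ℝ) :
    Differentiable ℝ (f ν) :=
  (hf.differentiable hn).comp ((differentiable_const ν).prodMk differentiable_id)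

/-- `f ν · - f ν' ·` is strictly decreasing: its derivative is `d2 f ν - d2 f ν' < 0`. -/
theorem add_lt_add_of_d12_neg {f : ℝ → ℝ → ℝ} (hf : ∀ ν, Differentiable ℝ (f ν))
    (htw : ∀ ν μ, d12 f ν μ < 0) {ν ν' μ μ' : ℝ} (hν : ν' < ν) (hμ : μ < μ') :
    f ν μ' + f ν' μ < f ν μ + f ν' μ' := by
  have hd2_anti : ∀ s, d2 f ν s < d2 f ν' s := fun s =>
    strictAnti_of_deriv_neg (fun t => htw t s) hν
  have hdiff : StrictAnti (fun s => f ν s - f ν' s) := by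
    refine strictAnti_of_deriv_neg fun s => ?_
    rw [deriv_fun_sub (hf ν s) (hf ν' s)]
    exact sub_neg.2 (hd2_anti s)
  linarith [hdiff hμ]

theorem add_le_add_of_d12_neg {f : ℝ → ℝ → ℝ} (hf : ∀ ν, Differentiable ℝ (f ν))
    (htw : ∀ ν μ, d12 f ν μ < 0) {ν ν' μ μ' : ℝ} (hν : ν' ≤ ν) (hμ : μ ≤ μ') :
    f ν μ' + f ν' μ ≤ f ν μ + f ν' μ' := by
  rcases hν.lt_or_eq with hν | rfl
  · rcases hμ.lt_or_eq with hμ | rfl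
    · exact (add_lt_add_of_d12_neg hf htw hν hμ).le
    · exact le_rfl
  · rw [add_comm]

theorem max_add_min_le_of_d12_neg {f : ℝ → ℝ → ℝ} (hf : ∀ ν, Differentiable ℝ (f ν))
    (htw : ∀ ν μ, d12 f ν μ < 0) (ν ν' μ μ' : ℝ) :
    f (max ν ν') (max μ μ') + f (min ν ν') (min μ μ') ≤ f ν μ + f ν' μ' := by
  rcases le_total ν' ν with hν | hν <;> rcases le_total μ μ' with hμ | hμ
  · rw [max_eq_left hν, max_eq_right hμ, min_eq_right hν, min_eq_left hμ]
    exact add_le_add_of_d12_neg hf htw hν hμ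
  · rw [max_eq_left hν, max_eq_left hμ, min_eq_right hν, min_eq_right hμ]
  · rw [max_eq_right hν, max_eq_right hμ, min_eq_left hν, min_eq_left hμ, add_comm]
  · rw [max_eq_right hν, max_eq_left hμ, min_eq_left hν, min_eq_right hμ]
    linarith [add_le_add_of_d12_neg hf htw hν hμ]

section Exchange

variable {r : ℕ} {f : ℕ → ℝ → ℝ → ℝ} (hf : ∀ j ν, Differentiable ℝ (f j ν))
  (htw : ∀ j ∈ Icc 1 r, ∀ ν μ, d12 (f j) ν μ < 0)
include hf htw

theorem siteE_sup_add_siteE_inf_le (x y : ℤ → ℝ) (i : ℤ) :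
    siteE r f (x ⊔ y) i + siteE r f (x ⊓ y) i ≤ siteE r f x i + siteE r f y i := by
  simp only [siteE, ← sum_add_distrib]
  exact sum_le_sum fun j hj => max_add_min_le_of_d12_neg (hf j) (htw j hj) _ _ _ _

theorem siteE_sup_add_siteE_inf_lt (hr : 1 ≤ r) {x y : ℤ → ℝ} {i : ℤ} (hi : y i < x i)
    (hi' : x (i + 1) < y (i + 1)) :
    siteE r f (x ⊔ y) i + siteE r f (x ⊓ y) i < siteE r f x i + siteE r f y i := by
  simp only [siteE, ← sum_add_distrib]
  have h1 : 1 ∈ Icc 1 r := mem_Icc.2 ⟨le_rfl, hr⟩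
  refine sum_lt_sum (fun j hj => max_add_min_le_of_d12_neg (hf j) (htw j hj) _ _ _ _)
    ⟨1, h1, ?_⟩
  simp only [Pi.sup_apply, Pi.inf_apply, Nat.cast_one, sup_of_le_left hi.le,
    sup_of_le_right hi'.le, inf_of_le_right hi.le, inf_of_le_left hi'.le]
  exact add_lt_add_of_d12_neg (hf 1) (htw 1 h1) hi hi'

theorem Wseg_sup_add_Wseg_inf_lt (hr : 1 ≤ r) {x y : ℤ → ℝ} {a b i : ℤ} (hab : i ∈ Icc a b)
    (hi : y i < x i) (hi' : x (i + 1) < y (i + 1)) :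
    Wseg r f a b (x ⊔ y) + Wseg r f a b (x ⊓ y) < Wseg r f a b x + Wseg r f a b y := by
  simp only [Wseg, ← sum_add_distrib]
  exact sum_lt_sum (fun k _ => siteE_sup_add_siteE_inf_le hf htw x y k)
    ⟨i, hab, siteE_sup_add_siteE_inf_lt hf htw hr hi hi'⟩

end Exchange

theorem IsGlobalMin.Wseg_le {r : ℕ} {f : ℕ → ℝ → ℝ → ℝ} {x z : ℤ → ℝ} (hx : IsGlobalMin r f x)
    {a b : ℤ} (hz : ∀ i ∉ Icc a b, z i = x i) :
    Wseg r f (a - r) b x ≤ Wseg r f (a - r) b z := by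
  have h := hx a b (z - x) fun i hi => by_contra fun hi' => hi (sub_eq_zero.2 (hz i hi'))
  rwa [add_sub_cancel] at h

theorem IsGlobalMin.not_crossing {r : ℕ} {f : ℕ → ℝ → ℝ → ℝ}
    (hf : ∀ j ν, Differentiable ℝ (f j ν)) (htw : ∀ j ∈ Icc 1 r, ∀ ν μ, d12 (f j) ν μ < 0)
    (hr : 1 ≤ r) {x y : ℤ → ℝ} (hx : IsGlobalMin r f x) (hy : IsGlobalMin r f y) {a b i : ℤ}
    (hout : ∀ k ∉ Icc a b, y k ≤ x k) (hi : i ∈ Icc (a - r) b) (hyx : y i < x i)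
    (hxy : x (i + 1) < y (i + 1)) : False := by
  have hsup := hx.Wseg_le (z := x ⊔ y) fun k hk => sup_eq_left.2 (hout k hk)
  have hinf := hy.Wseg_le (z := x ⊓ y) fun k hk => inf_eq_right.2 (hout k hk)
  linarith [Wseg_sup_add_Wseg_inf_lt hf htw hr hi hyx hxy]

theorem IsCrossingDomain.lt_of_isLeast {x y : ℤ → ℝ} {D : Set ℤ} (hD : IsCrossingDomain x y D)
    (hout : ∀ i ∉ D, y i ≤ x i) {a : ℤ} (ha : IsLeast D a) : x a < y a := by
  by_contra! hya
  have hle : ∀ i ∉ D \ {a}, y i ≤ x i := fun i hi => by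
    by_cases hiD : i ∈ D
    · obtain rfl : i = a := by simpa [hiD] using hi
      exact hya
    · exact hout i hiD
  have hconn : (D \ {a}).OrdConnected := by
    have : D \ {a} = D ∩ Set.Ioi a := by
      ext i
      simp only [Set.mem_sdiff, Set.mem_singleton_iff, Set.mem_inter_iff, Set.mem_Ioi]
      exact and_congr_right fun hi => (ha.2 hi).lt_iff_ne'.symm
    rw [this]
    exact hD.1.1.inter Set.ordConnected_Ioi
  have hcross : CrossProp x y (D \ {a}) :=
    ⟨hconn, Or.inr fun i hi => hle i fun h => (hi i h).false,
      Or.inr fun i hi => hle i fun h => (hi i h).false⟩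
  exact (hD.2 _ hcross ha.1).2 rfl

namespace LocalEnergy

variable {r : ℕ} {K lam : ℝ} (E : LocalEnergy r K lam)

theorem differentiable (j : ℕ) (ν : ℝ) : Differentiable ℝ (E.f j ν) :=
  differentiable_right_of_contDiff_uncurry (E.smooth j) two_ne_zero ν

theorem d12_neg (hlam : 0 < lam) : ∀ j ∈ Icc 1 r, ∀ ν μ, d12 (E.f j) ν μ < 0 :=
  fun j hj ν μ => (E.twist j hj ν μ).trans_lt (neg_neg_of_pos hlam)

end LocalEnergy

theorem stmt11_general (r : ℕ) (hr : 1 ≤ r) (K lam : ℝ) (hlam : 0 < lam)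
    (E : LocalEnergy r K lam) (x y : ℤ → ℝ)
    (hx : IsGlobalMin r E.f x) (hy : IsGlobalMin r E.f y)
    (D : Set ℤ) (hD : IsCrossingDomain x y D) (hfin : D.Finite)
    (hout : ∀ i : ℤ, i ∉ D → y i < x i) :
    D = ∅ := by
  by_contra hne
  have hne : D.Nonempty := Set.nonempty_iff_ne_empty.2 hne
  set a := sInf D
  have ha : IsLeast D a := ⟨hne.csInf_mem hfin, fun _ hj => csInf_le hfin.bddBelow hj⟩
  obtain ⟨b, hb⟩ := hfin.bddAbove
  have houtab : ∀ k ∉ Icc a b, y k ≤ x k := fun k hk =>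
    (hout k fun hkD => hk (mem_Icc.2 ⟨ha.2 hkD, hb hkD⟩)).le
  have hbefore : y (a - 1) < x (a - 1) := hout _ fun h => by linarith [ha.2 h]
  have hat : x (a - 1 + 1) < y (a - 1 + 1) := by
    rw [sub_add_cancel]
    exact hD.lt_of_isLeast (fun i hi => (hout i hi).le) ha
  have hmem : a - 1 ∈ Icc (a - r) b := mem_Icc.2 ⟨by omega, by linarith [hb ha.1]⟩
  exact hx.not_crossing E.differentiable (E.d12_neg hlam) hr hy houtab hmem hbefore hat

/-- If the domain of crossing `D` of two global minimizers is bounded (finite) and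
`x_i > y_i` for all `i ∉ D`, then `D` is empty. -/
theorem stmt11 (r : ℕ) (hr : 1 ≤ r) (K lam : ℝ) (hK : 0 < K) (hlam : 0 < lam)
    (E : LocalEnergy r K lam) (x y : ℤ → ℝ)
    (hx : IsGlobalMin r E.f x) (hy : IsGlobalMin r E.f y)
    (D : Set ℤ) (hD : IsCrossingDomain x y D) (hfin : D.Finite)
    (hout : ∀ i : ℤ, i ∉ D → y i < x i) :
    D = ∅ :=
  stmt11_general r hr K lam hlam E x y hx hy D hD hfin hout
end

section
/- Every Birkhoff sequence x has a rotation number ρ(x) = lim_{n→±∞} x_n/n, and satisfies the uniform estimate |x_n - x_0 - ρ(x)·n| ≤ 1 for all n ∈ Z. -/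
open Finset Filter Topology

/-!
Comparing `x` with its translates `τ_{n,l} x` for all integers `l` shows that the increments
`x (i + n) - x i`, `i ∈ ℤ`, all lie within `1` of each other, so `a n = x n - x 0` is a
quasimorphism `ℤ → ℝ` of defect `1`. Its homogenization `lim_k a (k n) / k` exists by Fekete's
lemma, is additive, hence equal to `ρ n` with `ρ` its value at `1`, and stays within the defect
of `a`. This is the uniform estimate, and the limits of `x n / n` at `±∞` follow from it.
-/

theorem sub_le_one_of_forall_int_le_or_le {ι : Type*} {g : ι → ℝ}
    (hg : ∀ l : ℤ, (∀ i, (l : ℝ) ≤ g i) ∨ ∀ i, g i ≤ l) (i j : ι) : g i - g j ≤ 1 := by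
  rcases hg (⌊g j⌋ + 1) with h | h
  · exact absurd (h j) (by push_cast; exact not_le.2 (Int.lt_floor_add_one _))
  · have := h i
    push_cast at this
    linarith [Int.floor_le (g j)]

theorem Birkhoff.forall_int_le_or_le {x : ℤ → ℝ} (hx : Birkhoff x) (n l : ℤ) :
    (∀ i, (l : ℝ) ≤ x (i + n) - x i) ∨ ∀ i, x (i + n) - x i ≤ l := by
  refine (hx n l).imp (fun h i => ?_) (fun h i => ?_) <;>
  · have := h (i + n)
    simp only [transl, add_sub_cancel_right] at this
    linarith

def IsQuasimorphism (a : ℤ → ℝ) (D : ℝ) : Prop :=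
  ∀ m n, |a (m + n) - a m - a n| ≤ D

theorem Birkhoff.isQuasimorphism {x : ℤ → ℝ} (hx : Birkhoff x) :
    IsQuasimorphism (fun n => x n - x 0) 1 := by
  intro m n
  have h := sub_le_one_of_forall_int_le_or_le (hx.forall_int_le_or_le n)
  have h₁ := h m 0
  have h₂ := h 0 m
  rw [zero_add] at h₁ h₂
  rw [abs_le]
  constructor <;> linarith

noncomputable def homogenization (a : ℤ → ℝ) (n : ℤ) : ℝ :=
  limUnder atTop fun k : ℕ => a (k * n) / k

namespace IsQuasimorphism

variable {a : ℤ → ℝ} {D : ℝ}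

theorem nonneg (ha : IsQuasimorphism a D) : 0 ≤ D :=
  (abs_nonneg _).trans (ha 0 0)

theorem abs_apply_mul_sub_le (ha : IsQuasimorphism a D) (n : ℤ) {k : ℕ} (hk : 1 ≤ k) :
    |a (k * n) - k * a n| ≤ k * D := by
  induction k, hk using Nat.le_induction with
  | base => simpa using ha.nonneg
  | succ k _ ih =>
    have h := ha (k * n) n
    rw [show ((k + 1 : ℕ) : ℤ) * n = k * n + n by push_cast; ring]
    push_cast
    calc |a (k * n + n) - (k + 1) * a n|
        = |(a (k * n + n) - a (k * n) - a n) + (a (k * n) - k * a n)| := by ring_nf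
      _ ≤ D + k * D := (abs_add_le _ _).trans (add_le_add h ih)
      _ = (k + 1) * D := by ring

theorem abs_apply_mul_div_sub_le (ha : IsQuasimorphism a D) (n : ℤ) {k : ℕ} (hk : 1 ≤ k) :
    |a (k * n) / k - a n| ≤ D := by
  have hk' : (0 : ℝ) < k := by exact_mod_cast hk
  rw [div_sub' hk'.ne', abs_div, abs_of_pos hk', div_le_iff₀ hk', mul_comm D]
  exact ha.abs_apply_mul_sub_le n hk

/-- Fekete's lemma applies to `k ↦ a (k n) + D`, which is subadditive. -/
theorem exists_tendsto_apply_mul_div (ha : IsQuasimorphism a D) (n : ℤ) :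
    ∃ L, Tendsto (fun k : ℕ => a (k * n) / k) atTop (𝓝 L) := by
  have hsub : Subadditive fun k : ℕ => a (k * n) + D := by
    intro j k
    have := (abs_le.1 (ha (j * n) (k * n))).2
    simp only [Nat.cast_add, add_mul]
    linarith
  have hbdd : BddBelow (Set.range fun k : ℕ => (a (k * n) + D) / k) := by
    refine ⟨min 0 (a n - D), Set.forall_mem_range.2 fun k => ?_⟩
    rcases Nat.eq_zero_or_pos k with rfl | hk
    · simp
    · have hk' : (0 : ℝ) < k := by exact_mod_cast hk
      have := (abs_le.1 (ha.abs_apply_mul_div_sub_le n hk)).1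
      rw [add_div]
      have : 0 ≤ D / k := div_nonneg ha.nonneg hk'.le
      linarith [min_le_right 0 (a n - D)]
  have h := (hsub.tendsto_lim hbdd).sub (tendsto_const_div_atTop_nhds_zero_nat D)
  rw [sub_zero] at h
  exact ⟨_, h.congr fun k => by rw [add_div, add_sub_cancel_right]⟩

theorem tendsto_homogenization (ha : IsQuasimorphism a D) (n : ℤ) :
    Tendsto (fun k : ℕ => a (k * n) / k) atTop (𝓝 (homogenization a n)) :=
  tendsto_nhds_limUnder (ha.exists_tendsto_apply_mul_div n)

theorem homogenization_add (ha : IsQuasimorphism a D) (m n : ℤ) :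
    homogenization a (m + n) = homogenization a m + homogenization a n := by
  have hdefect : Tendsto (fun k : ℕ => (a (k * (m + n)) - a (k * m) - a (k * n)) / k) atTop
      (𝓝 0) := by
    refine squeeze_zero_norm (fun k => ?_) (tendsto_const_div_atTop_nhds_zero_nat D)
    rw [Real.norm_eq_abs, abs_div, Nat.abs_cast, mul_add]
    exact div_le_div_of_nonneg_right (ha _ _) k.cast_nonneg
  have h := ((ha.tendsto_homogenization m).add (ha.tendsto_homogenization n)).add hdefect
  rw [add_zero] at h
  exact tendsto_nhds_unique (ha.tendsto_homogenization (m + n)) (h.congr fun k => by ring)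

theorem homogenization_eq_mul (ha : IsQuasimorphism a D) (n : ℤ) :
    homogenization a n = n * homogenization a 1 := by
  simpa using map_zsmul (AddMonoidHom.mk' (homogenization a) ha.homogenization_add) n 1

theorem abs_sub_homogenization_le (ha : IsQuasimorphism a D) (n : ℤ) :
    |a n - homogenization a n| ≤ D := by
  rw [abs_sub_comm]
  refine le_of_tendsto ((ha.tendsto_homogenization n).sub_const (a n)).abs ?_
  filter_upwards [eventually_ge_atTop 1] with k hk using ha.abs_apply_mul_div_sub_le n hk

end IsQuasimorphism

theorem tendsto_div_of_abs_sub_mul_le {α : Type*} {l : Filter α} {f g : α → ℝ} {ρ C : ℝ}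
    (hg : Tendsto g l (Bornology.cobounded ℝ)) (hf : ∀ i, |f i - ρ * g i| ≤ C) :
    Tendsto (fun i => f i / g i) l (𝓝 ρ) := by
  have h := isBoundedUnder_le_mul_tendsto_zero (f := fun i => f i - ρ * g i)
    ⟨C, eventually_map.2 (Eventually.of_forall fun i => by simpa using hf i)⟩
    (tendsto_inv₀_cobounded.comp hg)
  rw [← zero_add ρ]
  refine (h.add_const ρ).congr' ?_
  filter_upwards [hg.eventually_ne_cobounded 0] with i hi
  simp only [Function.comp_apply]
  field_simp
  ring

/-- Every Birkhoff sequence has a rotation number `ρ = lim_{n→±∞} x_n/n` and satisfies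
the uniform estimate `|x_n - x_0 - ρ n| ≤ 1` for all `n`. -/
theorem stmt14 (x : ℤ → ℝ) (hx : Birkhoff x) :
    ∃ ρ : ℝ, Tendsto (fun n : ℤ => x n / (n : ℝ)) atTop (𝓝 ρ) ∧
      Tendsto (fun n : ℤ => x n / (n : ℝ)) atBot (𝓝 ρ) ∧
      ∀ n : ℤ, |x n - x 0 - ρ * (n : ℝ)| ≤ 1 := by
  set a : ℤ → ℝ := fun n => x n - x 0
  have ha : IsQuasimorphism a 1 := hx.isQuasimorphism
  set ρ := homogenization a 1
  have hest (n : ℤ) : |x n - x 0 - ρ * n| ≤ 1 := by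
    have := ha.abs_sub_homogenization_le n
    rwa [ha.homogenization_eq_mul, mul_comm] at this
  have hbdd (n : ℤ) : |x n - ρ * n| ≤ 1 + |x 0| := by
    have := abs_add_le (x n - x 0 - ρ * n) (x 0)
    rw [show x n - x 0 - ρ * n + x 0 = x n - ρ * n by ring] at this
    linarith [hest n]
  have hlim := tendsto_div_of_abs_sub_mul_le tendsto_intCast_atBot_sup_atTop_cobounded hbdd
  exact ⟨ρ, hlim.mono_left le_sup_right, hlim.mono_left le_sup_left, hest⟩
end
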